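/- Let G₁ = N(μ₁,Σ₁) and G₂ = N(μ₂,Σ₂) be Gaussians on R^d with χ^{-1}·I ≤ Σ_j ≤ χ·I for j = 1,2. If d_TV(G₁,G₂) ≤ 1 − ε for some 0 < ε < 0.1, then ‖μ₁ − μ₂‖ ≤ C·√(χ·log(1/ε)) for a universal constant C. -/

import Mathlib

open MeasureTheory

/-- Density of the Gaussian `N(μ, A)` on `ℝ^d` at `z`. -/
noncomputable def gaussDensity {d : ℕ} (μ : Fin d → ℝ) (A : Matrix (Fin d) (Fin d) ℝ)
    (z : Fin d → ℝ) : ℝ :=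
  (Real.sqrt ((2 * Real.pi) ^ d * A.det))⁻¹ *
    Real.exp (-(dotProduct (z - μ) (A⁻¹.mulVec (z - μ))) / 2)

/-- The Gaussian measure `N(μ, A)` on `ℝ^d`. -/
noncomputable def gaussMeasure {d : ℕ} (μ : Fin d → ℝ)
    (A : Matrix (Fin d) (Fin d) ℝ) : Measure (Fin d → ℝ) :=
  volume.withDensity (fun z => ENNReal.ofReal (gaussDensity μ A z))

/-- Total variation distance between two measures. -/
noncomputable def tvDist {α : Type*} [MeasurableSpace α] (P Q : Measure α) : ℝ :=
  ⨆ s : {s : Set α // MeasurableSet s}, |(P s).toReal - (Q s).toReal|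

/-- Frobenius norm of a matrix. -/
noncomputable def frobNorm {d : ℕ} (M : Matrix (Fin d) (Fin d) ℝ) : ℝ :=
  Real.sqrt (∑ i, ∑ j, (M i j)^2)

/-!
Project onto the line through the two means. For `w = μ₁ - μ₂`, the statistic `⟪w, z - μ⟫` under
`N(μ, Σ)` has moment generating function `t ↦ exp (t² ⟪w, Σ w⟫ / 2)`, computed by the substitution
`z = μ + Σ^{1/2} y` that reduces to the standard Gaussian; with `Σ ⪯ χ I` the Chernoff bound shows
that each Gaussian gives mass at most `exp (-‖w‖² / (8χ))` to the half-space beyond the bisecting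
hyperplane on the side of the other mean. That half-space therefore witnesses
`d_TV ≥ 1 - 2 exp (-‖w‖² / (8χ))`, and `d_TV ≤ 1 - ε` with `ε ≤ 1/2` forces
`‖w‖² ≤ 16 χ log (1/ε)`.
-/

open Matrix Real ProbabilityTheory
open scoped ENNReal MatrixOrder

section Loewner
variable {n : Type*} [DecidableEq n] {S : Matrix n n ℝ} {c : ℝ}

lemma Matrix.PosSemidef.dotProduct_mulVec_le_mul [Fintype n] (h : (c • 1 - S).PosSemidef)
    (x : n → ℝ) : x ⬝ᵥ (S *ᵥ x) ≤ c * (x ⬝ᵥ x) := by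
  have := h.dotProduct_mulVec_nonneg x
  simp only [star_trivial, sub_mulVec, smul_mulVec, one_mulVec, dotProduct_sub,
    dotProduct_smul, smul_eq_mul] at this
  linarith

lemma Matrix.PosSemidef.posDef_of_sub_smul_one (h : (S - c • 1).PosSemidef) (hc : 0 < c) :
    S.PosDef := by
  simpa using PosDef.posSemidef_add h (PosDef.one.smul hc)

end Loewner

lemma Matrix.IsSymm.mulVec_dotProduct {n R : Type*} [Fintype n] [CommSemiring R]
    {B : Matrix n n R} (hB : B.IsSymm) (x y : n → R) : B *ᵥ x ⬝ᵥ y = x ⬝ᵥ B *ᵥ y := by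
  rw [dotProduct_mulVec, ← mulVec_transpose, hB.eq]

lemma lintegral_eq_abs_det_mul_lintegral_comp_mulVec {ι : Type*} [Fintype ι] [DecidableEq ι]
    {B : Matrix ι ι ℝ} (hB : B.det ≠ 0) {f : (ι → ℝ) → ℝ≥0∞} (hf : Measurable f) :
    ∫⁻ z, f z = ENNReal.ofReal |B.det| * ∫⁻ y, f (B *ᵥ y) := by
  have hmeas : Measurable (toLin' B) := (toLin' B).continuous_of_finiteDimensional.measurable
  have hmap : ∫⁻ y, f (B *ᵥ y) = ∫⁻ z, f z ∂(Measure.map (toLin' B) volume) :=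
    (lintegral_map hf hmeas).symm
  rw [hmap, map_matrix_volume_pi_eq_smul_volume_pi hB, lintegral_smul_measure, smul_eq_mul,
    ← mul_assoc, ← ENNReal.ofReal_mul (abs_nonneg _), ← abs_mul, mul_inv_cancel₀ hB, abs_one,
    ENNReal.ofReal_one, one_mul]

section StandardGaussian
variable {ι : Type*} [Fintype ι]

lemma cexp_neg_sum_half_sq_add_eq (c y : ι → ℝ) :
    Complex.exp (-∑ i, (1 / 2 : ℂ) * (y i : ℂ) ^ 2 + ∑ i, (c i : ℂ) * y i)
      = ↑(exp (-(y ⬝ᵥ y) / 2 + c ⬝ᵥ y)) := by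
  simp only [dotProduct]
  push_cast
  rw [neg_div, Finset.sum_div]
  congr 3
  exact Finset.sum_congr rfl fun i _ => by ring

lemma integrable_exp_neg_dotProduct_self_div_two_add (c : ι → ℝ) :
    Integrable fun y : ι → ℝ => exp (-(y ⬝ᵥ y) / 2 + c ⬝ᵥ y) := by
  have h := (GaussianFourier.integrable_cexp_neg_sum_mul_add (b := fun _ => (1 / 2 : ℂ))
    (fun _ => by norm_num) (fun i => (c i : ℂ))).norm
  simp_rw [cexp_neg_sum_half_sq_add_eq, Complex.norm_real, norm_of_nonneg (exp_pos _).le] at h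
  exact h

lemma integral_exp_neg_dotProduct_self_div_two_add (c : ι → ℝ) :
    ∫ y : ι → ℝ, exp (-(y ⬝ᵥ y) / 2 + c ⬝ᵥ y)
      = sqrt (2 * π) ^ Fintype.card ι * exp (c ⬝ᵥ c / 2) := by
  have h := GaussianFourier.integral_cexp_neg_sum_mul_add (b := fun _ => (1 / 2 : ℂ))
    (fun _ => by norm_num) (fun i => (c i : ℂ))
  simp_rw [cexp_neg_sum_half_sq_add_eq] at h
  have hfactor : ∀ i, (π / (1 / 2) : ℂ) ^ (1 / 2 : ℂ) * Complex.exp ((c i : ℂ) ^ 2 / (4 * (1 / 2)))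
      = ↑(sqrt (2 * π) * exp (c i ^ 2 / 2)) := by
    intro i
    rw [sqrt_eq_rpow, Complex.ofReal_mul, Complex.ofReal_cpow (by positivity), Complex.ofReal_exp]
    push_cast
    congr 2 <;> ring
  simp_rw [hfactor, integral_complex_ofReal, ← Complex.ofReal_prod] at h
  rw [Complex.ofReal_inj.mp h, Finset.prod_mul_distrib, Finset.prod_const, ← exp_sum,
    Finset.card_univ, dotProduct, Finset.sum_div]
  simp only [sq]

end StandardGaussian

section TotalVariation
variable {α : Type*} [MeasurableSpace α] {P Q : Measure α} {s : Set α}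

lemma abs_measureReal_sub_le_tvDist [IsFiniteMeasure P] [IsFiniteMeasure Q]
    (hs : MeasurableSet s) : |P.real s - Q.real s| ≤ tvDist P Q := by
  refine le_ciSup (f := fun s : {s : Set α // MeasurableSet s} => |P.real s - Q.real s|)
    ⟨P.real Set.univ + Q.real Set.univ, ?_⟩ ⟨s, hs⟩
  rintro _ ⟨t, rfl⟩
  have := measureReal_mono (μ := P) (Set.subset_univ t.1)
  have := measureReal_mono (μ := Q) (Set.subset_univ t.1)
  have := measureReal_nonneg (μ := P) (s := t.1)
  have := measureReal_nonneg (μ := Q) (s := t.1)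
  exact abs_sub_le_iff.mpr ⟨by linarith, by linarith⟩

lemma one_sub_measureReal_add_measureReal_compl_le_tvDist [IsProbabilityMeasure P]
    [IsProbabilityMeasure Q] (hs : MeasurableSet s) :
    1 - (P.real s + Q.real sᶜ) ≤ tvDist P Q := by
  have h := abs_measureReal_sub_le_tvDist (P := P) (Q := Q) hs.compl
  rw [probReal_compl_eq_one_sub hs] at h
  linarith [le_abs_self (1 - P.real s - Q.real sᶜ)]

end TotalVariation

section Gaussian
variable {d : ℕ}

@[fun_prop]
lemma continuous_gaussDensity (μ : Fin d → ℝ) (A : Matrix (Fin d) (Fin d) ℝ) :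
    Continuous (gaussDensity μ A) := by
  unfold gaussDensity
  fun_prop

lemma gaussDensity_nonneg (μ : Fin d → ℝ) (A : Matrix (Fin d) (Fin d) ℝ) (z : Fin d → ℝ) :
    0 ≤ gaussDensity μ A z := by
  unfold gaussDensity
  positivity

lemma gaussDensity_eq_gaussDensity_zero (μ : Fin d → ℝ) (A : Matrix (Fin d) (Fin d) ℝ)
    (z : Fin d → ℝ) : gaussDensity μ A z = gaussDensity 0 A (z - μ) := by
  simp [gaussDensity]

lemma gaussDensity_zero_mulVec {A B : Matrix (Fin d) (Fin d) ℝ} (hB : B.IsSymm) (hBA : B * B = A)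
    (hA : A.det ≠ 0) (y : Fin d → ℝ) :
    gaussDensity 0 A (B *ᵥ y) = (sqrt ((2 * π) ^ d * A.det))⁻¹ * exp (-(y ⬝ᵥ y) / 2) := by
  have hB₀ : IsUnit B.det := by
    rw [← hBA, det_mul] at hA
    exact Ne.isUnit (left_ne_zero_of_mul hA)
  have hBAB : B * A⁻¹ * B = 1 := by
    rw [← hBA, Matrix.mul_inv_rev, ← Matrix.mul_assoc, mul_nonsing_inv _ hB₀, Matrix.one_mul,
      nonsing_inv_mul _ hB₀]
  simp only [gaussDensity, sub_zero]
  rw [hB.mulVec_dotProduct, mulVec_mulVec, mulVec_mulVec, hBAB, one_mulVec]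

lemma lintegral_exp_dotProduct_mul_gaussDensity {A : Matrix (Fin d) (Fin d) ℝ} (hA : A.PosDef)
    (μ w : Fin d → ℝ) :
    ∫⁻ z, ENNReal.ofReal (exp (w ⬝ᵥ (z - μ)) * gaussDensity μ A z)
      = ENNReal.ofReal (exp (w ⬝ᵥ (A *ᵥ w) / 2)) := by
  set B := CFC.sqrt A
  have hBA : B * B = A := CFC.sqrt_mul_sqrt_self A hA.posSemidef.nonneg
  have hB : B.IsSymm := (CFC.sqrt_nonneg A).posSemidef.isHermitian
  have hdetA : 0 < A.det := hA.det_pos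
  have hdetB : |B.det| = sqrt A.det := by rw [← hBA, det_mul, ← sq, sqrt_sq_eq_abs]
  have hB₀ : B.det ≠ 0 := abs_pos.mp (hdetB ▸ sqrt_pos.mpr hdetA)
  set F : (Fin d → ℝ) → ℝ≥0∞ := fun z => ENNReal.ofReal (exp (w ⬝ᵥ z) * gaussDensity 0 A z)
  have hF : Measurable F := by fun_prop
  have hshift : ∫⁻ z, ENNReal.ofReal (exp (w ⬝ᵥ (z - μ)) * gaussDensity μ A z) = ∫⁻ z, F z := by
    simp_rw [gaussDensity_eq_gaussDensity_zero μ]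
    exact lintegral_sub_right_eq_self F μ
  have hsubst : ∀ y, F (B *ᵥ y) = ENNReal.ofReal
      ((sqrt ((2 * π) ^ d * A.det))⁻¹ * exp (-(y ⬝ᵥ y) / 2 + B *ᵥ w ⬝ᵥ y)) := by
    intro y
    simp only [F, gaussDensity_zero_mulVec hB hBA hdetA.ne', hB.mulVec_dotProduct, exp_add]
    ring_nf
  have hquad : B *ᵥ w ⬝ᵥ B *ᵥ w = w ⬝ᵥ A *ᵥ w := by
    rw [hB.mulVec_dotProduct, mulVec_mulVec, hBA]
  rw [hshift, lintegral_eq_abs_det_mul_lintegral_comp_mulVec hB₀ hF]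
  simp_rw [hsubst]
  rw [← ofReal_integral_eq_lintegral_ofReal
      ((integrable_exp_neg_dotProduct_self_div_two_add _).const_mul _)
      (Filter.Eventually.of_forall fun y => by positivity),
    integral_const_mul, integral_exp_neg_dotProduct_self_div_two_add, hquad,
    ← ENNReal.ofReal_mul (abs_nonneg _)]
  have hsqrt : sqrt ((2 * π) ^ d) = sqrt (2 * π) ^ d := by
    rw [← sqrt_sq (pow_nonneg (sqrt_nonneg _) d), ← pow_mul, mul_comm d 2, pow_mul,
      sq_sqrt (by positivity)]
  have : 0 < sqrt (2 * π) := by positivity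
  rw [hdetB, Fintype.card_fin, sqrt_mul (by positivity), hsqrt]
  field_simp

lemma lintegral_ofReal_exp_dotProduct_gaussMeasure {A : Matrix (Fin d) (Fin d) ℝ}
    (hA : A.PosDef) (μ w : Fin d → ℝ) :
    ∫⁻ z, ENNReal.ofReal (exp (w ⬝ᵥ (z - μ))) ∂gaussMeasure μ A
      = ENNReal.ofReal (exp (w ⬝ᵥ (A *ᵥ w) / 2)) := by
  rw [gaussMeasure, lintegral_withDensity_eq_lintegral_mul _
    (continuous_gaussDensity μ A).measurable.ennreal_ofReal (by fun_prop),
    ← lintegral_exp_dotProduct_mul_gaussDensity hA μ w]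
  refine lintegral_congr fun z => ?_
  rw [Pi.mul_apply, ← ENNReal.ofReal_mul (gaussDensity_nonneg μ A z), mul_comm]

lemma isProbabilityMeasure_gaussMeasure {A : Matrix (Fin d) (Fin d) ℝ} (hA : A.PosDef)
    (μ : Fin d → ℝ) : IsProbabilityMeasure (gaussMeasure μ A) :=
  ⟨by simpa using lintegral_ofReal_exp_dotProduct_gaussMeasure hA μ 0⟩

lemma integrable_exp_mul_dotProduct_gaussMeasure {A : Matrix (Fin d) (Fin d) ℝ}
    (hA : A.PosDef) (μ w : Fin d → ℝ) (t : ℝ) :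
    Integrable (fun z => exp (t * (w ⬝ᵥ (z - μ)))) (gaussMeasure μ A) := by
  refine ⟨by fun_prop, (hasFiniteIntegral_iff_ofReal
    (Filter.Eventually.of_forall fun z => (exp_pos _).le)).mpr ?_⟩
  simp_rw [← smul_eq_mul, ← smul_dotProduct,
    lintegral_ofReal_exp_dotProduct_gaussMeasure hA μ (t • w)]
  exact ENNReal.ofReal_lt_top

lemma mgf_dotProduct_gaussMeasure {A : Matrix (Fin d) (Fin d) ℝ} (hA : A.PosDef)
    (μ w : Fin d → ℝ) (t : ℝ) :
    mgf (fun z => w ⬝ᵥ (z - μ)) (gaussMeasure μ A) t = exp (t ^ 2 * (w ⬝ᵥ (A *ᵥ w)) / 2) := by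
  rw [mgf, integral_eq_lintegral_of_nonneg_ae (Filter.Eventually.of_forall fun z => (exp_pos _).le)
    (by fun_prop)]
  simp_rw [← smul_eq_mul, ← smul_dotProduct]
  rw [lintegral_ofReal_exp_dotProduct_gaussMeasure hA μ (t • w),
    ENNReal.toReal_ofReal (exp_pos _).le]
  simp only [mulVec_smul, dotProduct_smul, smul_dotProduct, smul_eq_mul]
  ring_nf

-- For `v = 0` the bound is `exp 0 = 1`, since `t ^ 2 / 0 = 0`.
lemma measureReal_gaussMeasure_ge_le_exp {A : Matrix (Fin d) (Fin d) ℝ} (hA : A.PosDef)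
    (μ w : Fin d → ℝ) {v t : ℝ} (hv : 0 ≤ v) (hwv : w ⬝ᵥ (A *ᵥ w) ≤ v) (ht : 0 ≤ t) :
    (gaussMeasure μ A).real {z | t ≤ w ⬝ᵥ (z - μ)} ≤ exp (-t ^ 2 / (2 * v)) := by
  have := isProbabilityMeasure_gaussMeasure hA μ
  refine (measure_ge_le_exp_mul_mgf t (div_nonneg ht hv)
    (integrable_exp_mul_dotProduct_gaussMeasure hA μ w _)).trans ?_
  rw [mgf_dotProduct_gaussMeasure hA, ← exp_add]
  refine exp_le_exp.mpr ?_
  rcases hv.eq_or_lt with rfl | hv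
  · simp
  · calc -(t / v) * t + (t / v) ^ 2 * (w ⬝ᵥ (A *ᵥ w)) / 2
        _ ≤ -(t / v) * t + (t / v) ^ 2 * v / 2 := by gcongr
        _ = -t ^ 2 / (2 * v) := by field_simp; ring

lemma one_sub_two_mul_exp_le_tvDist_gaussMeasure {A₁ A₂ : Matrix (Fin d) (Fin d) ℝ} {χ : ℝ}
    (hχ : 0 ≤ χ) (hA₁ : A₁.PosDef) (hA₂ : A₂.PosDef) (h₁ : (χ • 1 - A₁).PosSemidef)
    (h₂ : (χ • 1 - A₂).PosSemidef) (μ₁ μ₂ : Fin d → ℝ) :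
    1 - 2 * exp (-((μ₁ - μ₂) ⬝ᵥ (μ₁ - μ₂)) / (8 * χ))
      ≤ tvDist (gaussMeasure μ₁ A₁) (gaussMeasure μ₂ A₂) := by
  have := isProbabilityMeasure_gaussMeasure hA₁ μ₁
  have := isProbabilityMeasure_gaussMeasure hA₂ μ₂
  set w := μ₁ - μ₂
  set r := w ⬝ᵥ w
  have hr : 0 ≤ r := by simpa using dotProduct_star_self_nonneg w
  set E := {z | r / 2 ≤ -w ⬝ᵥ (z - μ₁)}
  have hE : MeasurableSet E := measurableSet_le measurable_const (by fun_prop)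
  have hsub : Eᶜ ⊆ {z | r / 2 ≤ w ⬝ᵥ (z - μ₂)} := by
    intro z hz
    have hz : -w ⬝ᵥ (z - μ₁) < r / 2 := not_le.mp hz
    simp only [Set.mem_ofPred_eq, ← sub_add_sub_cancel z μ₁ μ₂, dotProduct_add,
      neg_dotProduct] at hz ⊢
    linarith
  have hexponent : -(r / 2) ^ 2 / (2 * (χ * r)) = -r / (8 * χ) := by
    rcases hr.eq_or_lt with hr0 | hr0
    · simp [← hr0]
    · field_simp
      ring
  have hP := measureReal_gaussMeasure_ge_le_exp hA₁ μ₁ (-w) (t := r / 2)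
    (mul_nonneg hχ hr) (by simpa [mulVec_neg] using h₁.dotProduct_mulVec_le_mul w)
    (by positivity)
  have hQ := (measureReal_mono hsub).trans (measureReal_gaussMeasure_ge_le_exp hA₂ μ₂ w
    (t := r / 2) (mul_nonneg hχ hr) (h₂.dotProduct_mulVec_le_mul w) (by positivity))
  rw [hexponent] at hP hQ
  linarith [one_sub_measureReal_add_measureReal_compl_le_tvDist (P := gaussMeasure μ₁ A₁)
    (Q := gaussMeasure μ₂ A₂) hE]

end Gaussian

/-- There is a universal constant `C` such that for `χ`-balanced Gaussians
(`χ⁻¹·I ⪯ Σ_j ⪯ χ·I`), if `d_TV(G₁,G₂) ≤ 1 − ε` with `0 < ε < 0.1`, then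
`‖μ₁ − μ₂‖ ≤ C·√(χ·log(1/ε))`. -/
theorem balanced_gaussian_mean_separation :
    ∃ C : ℝ, 0 < C ∧ ∀ (d : ℕ) (μ₁ μ₂ : Fin d → ℝ)
      (S₁ S₂ : Matrix (Fin d) (Fin d) ℝ) (χ ε : ℝ),
      0 < χ →
      (S₁ - χ⁻¹ • 1).PosSemidef → (χ • 1 - S₁).PosSemidef →
      (S₂ - χ⁻¹ • 1).PosSemidef → (χ • 1 - S₂).PosSemidef →
      0 < ε → ε < 0.1 →
      tvDist (gaussMeasure μ₁ S₁) (gaussMeasure μ₂ S₂) ≤ 1 - ε →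
      Real.sqrt (dotProduct (μ₁ - μ₂) (μ₁ - μ₂)) ≤
        C * Real.sqrt (χ * Real.log (1/ε)) := by
  refine ⟨4, by norm_num, fun d μ₁ μ₂ S₁ S₂ χ ε hχ hS₁ hS₁' hS₂ hS₂' hε hε' htv => ?_⟩
  have hsep := one_sub_two_mul_exp_le_tvDist_gaussMeasure hχ.le
    (hS₁.posDef_of_sub_smul_one (inv_pos.mpr hχ)) (hS₂.posDef_of_sub_smul_one (inv_pos.mpr hχ))
    hS₁' hS₂' μ₁ μ₂
  set r := (μ₁ - μ₂) ⬝ᵥ (μ₁ - μ₂)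
  norm_num at hε'
  have hlog : 2 * log ε ≤ -r / (8 * χ) := by
    rw [← log_exp (-r / (8 * χ)), show 2 * log ε = log (ε ^ 2) by rw [log_pow]; norm_num]
    exact log_le_log (by positivity) (by nlinarith)
  have hL : 0 ≤ log (1 / ε) := log_nonneg (by rw [le_div_iff₀ hε]; linarith)
  have hr : r ≤ 4 ^ 2 * (χ * log (1 / ε)) := by
    rw [le_div_iff₀ (by positivity)] at hlog
    rw [one_div, log_inv]
    nlinarith
  calc sqrt r ≤ sqrt (4 ^ 2 * (χ * log (1 / ε))) := sqrt_le_sqrt hr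
    _ = 4 * sqrt (χ * log (1 / ε)) := by rw [sqrt_mul (by norm_num), sqrt_sq (by norm_num)]
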